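/- Let n ≥ 1, x_t, x_s, β ∈ ℝⁿ, α ∈ ℝ, and σ > 0. Let U_t = x_t'β + α + ε_t and U_s = x_s'β + α + ε_s, where ε_t and ε_s are independent, each distributed N(0, σ²). Then E[(U_t²U_s − U_s²U_t − U_tU_s·(x_t − x_s)'β + (U_t − U_s)·σ²)·1{U_t>0, U_s>0}] = 0. -/

import Mathlib

/-!
Stein's identity on a half-line: integrating `(u ^ (k + 1) φ(u))'` over `(0, ∞)`, where the
boundary terms vanish at both ends, gives `m (k + 2) = μ m (k + 1) + (k + 1) σ² m k` for the
truncated moments `m k = ∫₀^∞ u ^ k φ(u) du` of the `N(μ, σ²)` density `φ`. By independence the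
expectation is a bilinear combination of products of truncated moments of the two periods, and
substituting `m 2 = μ m 1 + σ² m 0` in both periods makes it cancel.
-/

open MeasureTheory

noncomputable def normalPDF (μ σ u : ℝ) : ℝ :=
  (1 / (σ * Real.sqrt (2 * Real.pi))) * Real.exp (-(u - μ) ^ 2 / (2 * σ ^ 2))

open ProbabilityTheory Real Set

lemma normalPDF_eq_gaussianPDFReal {σ : ℝ} (hσ : 0 < σ) (μ : ℝ) :
    normalPDF μ σ = gaussianPDFReal μ (σ ^ 2).toNNReal := by
  ext u
  rw [normalPDF, gaussianPDFReal, Real.coe_toNNReal _ (sq_nonneg σ),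
    show 2 * π * σ ^ 2 = σ ^ 2 * (2 * π) by ring, sqrt_mul (sq_nonneg σ), sqrt_sq hσ.le, one_div]

lemma integrable_pow_mul_normalPDF {σ : ℝ} (hσ : 0 < σ) (μ : ℝ) (k : ℕ) :
    Integrable (fun u => u ^ k * normalPDF μ σ u) := by
  have hv : (σ ^ 2).toNNReal ≠ 0 := by simpa using hσ.ne'
  have hpow : Integrable (fun u : ℝ => u ^ k) (gaussianReal μ (σ ^ 2).toNNReal) :=
    (integrable_norm_iff (by fun_prop)).1 <| by
      simpa [norm_pow] using
        (memLp_id_gaussianReal (μ := μ) (v := (σ ^ 2).toNNReal) k).integrable_norm_pow'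
  rw [gaussianReal_of_var_ne_zero _ hv, integrable_withDensity_iff_integrable_smul'
    (measurable_gaussianPDF _ _) (ae_of_all _ fun _ => gaussianPDF_lt_top)] at hpow
  simpa [normalPDF_eq_gaussianPDFReal hσ, toReal_gaussianPDF, mul_comm] using hpow

lemma hasDerivAt_normalPDF (μ σ u : ℝ) :
    HasDerivAt (normalPDF μ σ) (-(u - μ) / σ ^ 2 * normalPDF μ σ u) u := by
  have hexponent : HasDerivAt (fun x => -(x - μ) ^ 2 / (2 * σ ^ 2)) (-(u - μ) / σ ^ 2) u :=
    ((((hasDerivAt_id u).sub_const μ).fun_pow 2).neg.div_const (2 * σ ^ 2)).congr_deriv (by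
      simp only [id]; ring)
  exact (hexponent.exp.const_mul (1 / (σ * √(2 * π)))).congr_deriv (by rw [normalPDF]; ring)

noncomputable def truncatedMoment (μ σ : ℝ) (k : ℕ) : ℝ :=
  ∫ u in Ioi 0, u ^ k * normalPDF μ σ u

lemma truncatedMoment_add_two {σ : ℝ} (hσ : 0 < σ) (μ : ℝ) (k : ℕ) :
    truncatedMoment μ σ (k + 2)
      = μ * truncatedMoment μ σ (k + 1) + (k + 1) * σ ^ 2 * truncatedMoment μ σ k := by
  set φ := normalPDF μ σ
  set φ' : ℝ → ℝ := fun x =>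
    (k + 1) * (x ^ k * φ x) + μ / σ ^ 2 * (x ^ (k + 1) * φ x) - 1 / σ ^ 2 * (x ^ (k + 2) * φ x)
  have hderiv : ∀ x, HasDerivAt (fun u => u ^ (k + 1) * φ u) (φ' x) x := fun x =>
    ((hasDerivAt_pow (k + 1) x).mul (hasDerivAt_normalPDF μ σ x)).congr_deriv (by
      simp only [φ', φ, Nat.add_sub_cancel]; push_cast; ring)
  have hint : ∀ j : ℕ, IntegrableOn (fun u => u ^ j * φ u) (Ioi 0) := fun j =>
    (integrable_pow_mul_normalPDF hσ μ j).integrableOn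
  have hint₀ := (hint k).const_mul ((k : ℝ) + 1)
  have hint₁ := (hint (k + 1)).const_mul (μ / σ ^ 2)
  have hint₂ := (hint (k + 2)).const_mul (1 / σ ^ 2)
  have hint' : IntegrableOn φ' (Ioi 0) := (hint₀.fun_add hint₁).sub' hint₂
  have hFTC := integral_Ioi_of_hasDerivAt_of_tendsto' (fun x _ => hderiv x) hint'
    (tendsto_zero_of_hasDerivAt_of_integrableOn_Ioi (fun x _ => hderiv x) hint' (hint (k + 1)))
  rw [integral_sub (hint₀.fun_add hint₁) hint₂, integral_add hint₀ hint₁,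
    integral_const_mul, integral_const_mul, integral_const_mul, zero_pow (Nat.succ_ne_zero k),
    zero_mul, sub_zero] at hFTC
  simp only [truncatedMoment]
  field_simp at hFTC
  linarith

lemma truncatedMoment_two {σ : ℝ} (hσ : 0 < σ) (μ : ℝ) :
    truncatedMoment μ σ 2 = μ * truncatedMoment μ σ 1 + σ ^ 2 * truncatedMoment μ σ 0 := by
  simpa using truncatedMoment_add_two hσ μ 0

lemma integral_prod_sum_mul {α β ι κ : Type*} [MeasurableSpace α] [MeasurableSpace β]
    [Fintype ι] [Fintype κ] {μ : Measure α} {ν : Measure β} [SFinite μ] [SFinite ν]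
    (c : ι → κ → ℝ) {f : ι → α → ℝ} {g : κ → β → ℝ}
    (hf : ∀ i, Integrable (f i) μ) (hg : ∀ j, Integrable (g j) ν) :
    ∫ p, ∑ i, ∑ j, c i j * (f i p.1 * g j p.2) ∂(μ.prod ν)
      = ∑ i, ∑ j, c i j * ((∫ x, f i x ∂μ) * ∫ y, g j y ∂ν) := by
  have hterm : ∀ i j, Integrable (fun p : α × β => c i j * (f i p.1 * g j p.2)) (μ.prod ν) :=
    fun i j => ((hf i).mul_prod (hg j)).const_mul _
  rw [integral_finsetSum _ fun i _ => integrable_finsetSum _ fun j _ => hterm i j]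
  refine Finset.sum_congr rfl fun i _ => ?_
  rw [integral_finsetSum _ fun j _ => hterm i j]
  refine Finset.sum_congr rfl fun j _ => ?_
  rw [integral_const_mul, integral_prod_mul]

theorem panel_tobit_individual_variance_moment_general (n : ℕ)
    (xt xs β : Fin n → ℝ) (α : ℝ) (σ : ℝ) (hσ : 0 < σ) :
    ∫ p in Set.Ioi (0 : ℝ) ×ˢ Set.Ioi (0 : ℝ),
        (p.1 ^ 2 * p.2 - p.2 ^ 2 * p.1
            - p.1 * p.2 * (∑ i, (xt i - xs i) * β i)
            + (p.1 - p.2) * σ ^ 2)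
          * (normalPDF (∑ i, xt i * β i + α) σ p.1
              * normalPDF (∑ i, xs i * β i + α) σ p.2) = 0 := by
  set μt := ∑ i, xt i * β i + α
  set μs := ∑ i, xs i * β i + α
  have hmean : ∑ i, (xt i - xs i) * β i = μt - μs := by
    simp only [μt, μs, sub_mul, Finset.sum_sub_distrib]
    ring
  let c : Fin 3 → Fin 3 → ℝ := ![![0, -σ ^ 2, 0], ![σ ^ 2, -(μt - μs), -1], ![0, 1, 0]]
  have hexpand : ∀ p : ℝ × ℝ,
      (p.1 ^ 2 * p.2 - p.2 ^ 2 * p.1 - p.1 * p.2 * (μt - μs) + (p.1 - p.2) * σ ^ 2)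
          * (normalPDF μt σ p.1 * normalPDF μs σ p.2)
        = ∑ i, ∑ j, c i j * (p.1 ^ (i : ℕ) * normalPDF μt σ p.1
            * (p.2 ^ (j : ℕ) * normalPDF μs σ p.2)) := by
    intro p
    simp only [c, Fin.sum_univ_three, Matrix.cons_val_zero, Matrix.cons_val_one, Matrix.cons_val_two,
      Matrix.tail_cons, Matrix.head_cons, Fin.val_zero, Fin.val_one, Fin.val_two]
    ring
  have hfactor : ∫ p in Ioi (0 : ℝ) ×ˢ Ioi (0 : ℝ),
      ∑ i, ∑ j, c i j * (p.1 ^ (i : ℕ) * normalPDF μt σ p.1 * (p.2 ^ (j : ℕ) * normalPDF μs σ p.2))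
      = ∑ i, ∑ j, c i j * (truncatedMoment μt σ i * truncatedMoment μs σ j) := by
    rw [Measure.volume_eq_prod, ← Measure.prod_restrict]
    exact integral_prod_sum_mul c (fun i => (integrable_pow_mul_normalPDF hσ μt i).integrableOn)
      (fun j => (integrable_pow_mul_normalPDF hσ μs j).integrableOn)
  simp_rw [hmean, hexpand]
  rw [hfactor]
  simp only [c, Fin.sum_univ_three, Matrix.cons_val_zero, Matrix.cons_val_one, Matrix.cons_val_two,
    Matrix.tail_cons, Matrix.head_cons, Fin.val_zero, Fin.val_one, Fin.val_two]
  rw [truncatedMoment_two hσ, truncatedMoment_two hσ]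
  ring

/-- Moment condition (Estm_h1) for the fixed-effects panel Tobit model with an
individual-specific error variance: with `U_t ~ N(x_t'β + α, σ²)` and
`U_s ~ N(x_s'β + α, σ²)` independent,
`E[(U_t²U_s − U_s²U_t − U_tU_s(x_t − x_s)'β + (U_t − U_s)σ²)·1{U_t>0,U_s>0}] = 0`. -/
theorem panel_tobit_individual_variance_moment (n : ℕ) (hn : 1 ≤ n)
    (xt xs β : Fin n → ℝ) (α : ℝ) (σ : ℝ) (hσ : 0 < σ) :
    ∫ p in Set.Ioi (0 : ℝ) ×ˢ Set.Ioi (0 : ℝ),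
        (p.1 ^ 2 * p.2 - p.2 ^ 2 * p.1
            - p.1 * p.2 * (∑ i, (xt i - xs i) * β i)
            + (p.1 - p.2) * σ ^ 2)
          * (normalPDF (∑ i, xt i * β i + α) σ p.1
              * normalPDF (∑ i, xs i * β i + α) σ p.2) = 0 :=
  panel_tobit_individual_variance_moment_general n xt xs β α σ hσ
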